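/- Let (𝕏, d) and (𝕊, σ) be metric spaces, Φ : 𝕏 → 𝕊 Lipschitz continuous, (μ_n) Borel probability measures on 𝕏, (a_n) positive reals tending to infinity, and I : 𝕏 → [0,∞]. Assume (μ_n) satisfies the extended large deviation bounds in 𝕏 with speed a_n and rate I. Define I'(y) = inf{ I(x) : Φ(x) = y } and ν_n = μ_n ∘ Φ⁻¹, and assume that I' is a good rate function, i.e. the sublevel set {y ∈ 𝕊 : I'(y) ≤ M} is compact for every M ∈ [0,∞). Then (ν_n) satisfies the full large deviation principle in 𝕊 with speed a_n and rate I': for every open G ⊆ 𝕊, liminf_n (1/a_n) log ν_n(G) ≥ −inf_{y∈G} I'(y), and for every closed F ⊆ 𝕊, limsup_n (1/a_n) log ν_n(F) ≤ −inf_{y∈F} I'(y). -/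

import Mathlib

open Set Filter MeasureTheory Metric ENNReal

noncomputable section

/-- The normalized log-probability `a_n⁻¹ · log μ_n(A)` (with `log 0 = -∞`), as an `EReal`. -/
def logProbRate (a : ℕ → ℝ) (p : ℕ → ℝ≥0∞) : ℕ → EReal :=
  fun n => (((a n)⁻¹ : ℝ) : EReal) * ENNReal.log (p n)

/-- The extended-LDP lower bound: for every open `G`,
`liminf a_n⁻¹ log μ_n(G) ≥ - inf_{x ∈ G} I(x)`. -/
def ExtLDPLowerBound {X : Type*} [MetricSpace X] [MeasurableSpace X]
    (μ : ℕ → Measure X) (a : ℕ → ℝ) (I : X → ℝ≥0∞) : Prop :=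
  ∀ G : Set X, IsOpen G →
    -(⨅ x ∈ G, (I x : EReal)) ≤
      Filter.liminf (logProbRate a (fun n => μ n G)) Filter.atTop

/-- The extended-LDP upper bound: for every closed `F`,
`limsup a_n⁻¹ log μ_n(F) ≤ - sup_{ε > 0} inf_{x ∈ F^ε} I(x)`,
where `F^ε` is the closed `ε`-thickening of `F`. -/
def ExtLDPUpperBound {X : Type*} [MetricSpace X] [MeasurableSpace X]
    (μ : ℕ → Measure X) (a : ℕ → ℝ) (I : X → ℝ≥0∞) : Prop :=
  ∀ F : Set X, IsClosed F →
    Filter.limsup (logProbRate a (fun n => μ n F)) Filter.atTop ≤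
      -(⨆ (ε : ℝ) (_ : 0 < ε), ⨅ x ∈ Metric.cthickening ε F, (I x : EReal))

/-- The pushforward rate function `I'(y) = inf { I(x) : Φ(x) = y }`. -/
def pushRate {X S : Type*} (Φ : X → S) (I : X → ℝ≥0∞) : S → ℝ≥0∞ :=
  fun y => ⨅ (x : X) (_ : Φ x = y), I x

/-!
The lower bound transfers directly, since `Φ ⁻¹' G` is open and the infimum of `I'` over `G`
is the infimum of `I` over `Φ ⁻¹' G`. For the upper bound, uniform continuity of `Φ` gives for
every `ε > 0` some `δ > 0` with `(Φ ⁻¹' F)^δ ⊆ Φ ⁻¹' (F^ε)`, so the extended upper bound passes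
to the pushforwards with rate `I'`. Goodness of `I'` then removes the thickening: if
`sup_ε inf_{F^ε} I' < M < inf_F I'`, the compact sublevel set `{I' ≤ M}` is disjoint from the
closed set `F`, so some `δ`-thickenings of the two are disjoint, contradicting
`inf_{F^δ} I' < M`.
-/

theorem EReal.coe_ennreal_iInf {ι : Sort*} (f : ι → ℝ≥0∞) :
    ((⨅ i, f i : ℝ≥0∞) : EReal) = ⨅ i, (f i : EReal) :=
  Monotone.map_iInf_of_continuousAt continuous_coe_ennreal_ereal.continuousAt
    EReal.coe_ennreal_strictMono.monotone EReal.coe_ennreal_top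

theorem EReal.coe_ennreal_biSup {ι : Sort*} {p : ι → Prop} (hp : ∃ i, p i) (f : ι → ℝ≥0∞) :
    ((⨆ (i) (_ : p i), f i : ℝ≥0∞) : EReal) = ⨆ (i) (_ : p i), (f i : EReal) := by
  have : Nonempty (Subtype p) := nonempty_subtype.2 hp
  rw [iSup_subtype', iSup_subtype']
  exact Monotone.map_ciSup_of_continuousAt continuous_coe_ennreal_ereal.continuousAt
    EReal.coe_ennreal_strictMono.monotone

theorem biInf_pushRate {X S : Type*} (Φ : X → S) (I : X → ℝ≥0∞) (A : Set S) :
    ⨅ y ∈ A, pushRate Φ I y = ⨅ x ∈ Φ ⁻¹' A, I x := by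
  rw [← biUnion_preimage_singleton, biUnion_eq_iUnion, iInf_iUnion, iInf_subtype']
  rfl

theorem biInf_coe_pushRate {X S : Type*} (Φ : X → S) (I : X → ℝ≥0∞) (A : Set S) :
    ⨅ y ∈ A, (pushRate Φ I y : EReal) = ⨅ x ∈ Φ ⁻¹' A, (I x : EReal) := by
  simp only [← EReal.coe_ennreal_iInf, biInf_pushRate]

theorem UniformContinuous.exists_cthickening_preimage_subset {X S : Type*}
    [PseudoMetricSpace X] [PseudoMetricSpace S] {Φ : X → S} (hΦ : UniformContinuous Φ)
    (F : Set S) {ε : ℝ} (hε : 0 < ε) :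
    ∃ δ > 0, cthickening δ (Φ ⁻¹' F) ⊆ Φ ⁻¹' cthickening ε F := by
  obtain ⟨δ, hδ, hΦδ⟩ := Metric.uniformContinuous_iff.1 hΦ ε hε
  refine ⟨δ / 2, half_pos hδ, fun x hx => ?_⟩
  obtain ⟨z, hzF, hxz⟩ :=
    mem_thickening_iff.1 (cthickening_subset_thickening' hδ (half_lt_self hδ) _ hx)
  exact thickening_subset_cthickening ε F (mem_thickening_iff.2 ⟨Φ z, hzF, hΦδ hxz⟩)

theorem iSup_biInf_cthickening_eq_biInf {S : Type*} [PseudoMetricSpace S] {f : S → ℝ≥0∞}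
    (hf : ∀ M : ℝ≥0∞, M ≠ ⊤ → IsCompact {y | f y ≤ M}) {F : Set S} (hF : IsClosed F) :
    ⨆ (ε : ℝ) (_ : 0 < ε), ⨅ y ∈ cthickening ε F, f y = ⨅ y ∈ F, f y := by
  refine le_antisymm (iSup₂_le fun ε _ => biInf_mono (self_subset_cthickening F)) ?_
  by_contra! hlt
  obtain ⟨M, hsM, hMF⟩ := exists_between hlt
  have hdisj : Disjoint {y | f y ≤ M} F :=
    Set.disjoint_left.2 fun y hyM hyF => (hMF.trans_le (biInf_le f hyF)).not_ge hyM
  obtain ⟨δ, hδ, hsep⟩ := hdisj.exists_cthickenings (hf M hMF.ne_top) hF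
  obtain ⟨y, hyF, hyM⟩ : ∃ y ∈ cthickening δ F, f y < M := by
    simpa only [iInf_lt_iff, exists_prop] using (le_iSup₂ (f := fun (ε : ℝ) (_ : 0 < ε) =>
      ⨅ y ∈ cthickening ε F, f y) δ hδ).trans_lt hsM
  exact Set.disjoint_left.1 hsep (self_subset_cthickening _ hyM.le) hyF

def LDPUpperBound {X : Type*} [MetricSpace X] [MeasurableSpace X]
    (μ : ℕ → Measure X) (a : ℕ → ℝ) (I : X → ℝ≥0∞) : Prop :=
  ∀ F : Set X, IsClosed F →
    Filter.limsup (logProbRate a (fun n => μ n F)) Filter.atTop ≤ -(⨅ x ∈ F, (I x : EReal))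

section map

variable {X S : Type*} [MetricSpace X] [MeasurableSpace X] [OpensMeasurableSpace X]
  [MetricSpace S] [MeasurableSpace S] [BorelSpace S] {Φ : X → S}
  {μ : ℕ → Measure X} {a : ℕ → ℝ} {I : X → ℝ≥0∞}

theorem ExtLDPLowerBound.map (hlow : ExtLDPLowerBound μ a I) (hΦ : Continuous Φ) :
    ExtLDPLowerBound (fun n => (μ n).map Φ) a (pushRate Φ I) := by
  intro G hG
  simpa only [Measure.map_apply hΦ.measurable hG.measurableSet, biInf_coe_pushRate]
    using hlow _ (hG.preimage hΦ)

theorem ExtLDPUpperBound.map (hup : ExtLDPUpperBound μ a I) (hΦ : UniformContinuous Φ) :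
    ExtLDPUpperBound (fun n => (μ n).map Φ) a (pushRate Φ I) := by
  intro F hF
  simp only [Measure.map_apply hΦ.continuous.measurable hF.measurableSet]
  refine (hup _ (hF.preimage hΦ.continuous)).trans (EReal.neg_le_neg_iff.2 ?_)
  refine iSup₂_le fun ε hε => ?_
  obtain ⟨δ, hδ, hsub⟩ := hΦ.exists_cthickening_preimage_subset F hε
  calc ⨅ y ∈ cthickening ε F, (pushRate Φ I y : EReal)
      = ⨅ x ∈ Φ ⁻¹' cthickening ε F, (I x : EReal) := biInf_coe_pushRate Φ I _
    _ ≤ ⨅ x ∈ cthickening δ (Φ ⁻¹' F), (I x : EReal) := biInf_mono hsub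
    _ ≤ _ := le_iSup₂ (f := fun (δ : ℝ) (_ : 0 < δ) =>
        ⨅ x ∈ cthickening δ (Φ ⁻¹' F), (I x : EReal)) δ hδ

end map

theorem ExtLDPUpperBound.toLDPUpperBound {X : Type*} [MetricSpace X] [MeasurableSpace X]
    {μ : ℕ → Measure X} {a : ℕ → ℝ} {I : X → ℝ≥0∞} (hup : ExtLDPUpperBound μ a I)
    (hI : ∀ M : ℝ≥0∞, M ≠ ⊤ → IsCompact {x | I x ≤ M}) : LDPUpperBound μ a I := by
  intro F hF
  refine (hup F hF).trans (EReal.neg_le_neg_iff.2 (le_of_eq ?_))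
  have h := congrArg ((↑) : ℝ≥0∞ → EReal) (iSup_biInf_cthickening_eq_biInf hI hF)
  rw [EReal.coe_ennreal_biSup ⟨1, one_pos⟩] at h
  simpa only [EReal.coe_ennreal_iInf] using h.symm

theorem contraction_principle_good_rate_general
    {X S : Type*} [MetricSpace X] [MeasurableSpace X] [BorelSpace X]
    [MetricSpace S] [MeasurableSpace S] [BorelSpace S]
    (Φ : X → S) (L : NNReal) (hΦ : LipschitzWith L Φ)
    (μ : ℕ → Measure X)
    (a : ℕ → ℝ)
    (I : X → ℝ≥0∞)
    (hlow : ExtLDPLowerBound μ a I) (hup : ExtLDPUpperBound μ a I)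
    (hgood : ∀ M : ℝ≥0∞, M ≠ ⊤ → IsCompact {y : S | pushRate Φ I y ≤ M}) :
    (∀ G : Set S, IsOpen G →
      -(⨅ y ∈ G, (pushRate Φ I y : EReal)) ≤
        Filter.liminf (logProbRate a (fun n => (μ n).map Φ G)) Filter.atTop) ∧
    (∀ F : Set S, IsClosed F →
      Filter.limsup (logProbRate a (fun n => (μ n).map Φ F)) Filter.atTop ≤
        -(⨅ y ∈ F, (pushRate Φ I y : EReal))) :=
  ⟨hlow.map hΦ.continuous, (hup.map hΦ.uniformContinuous).toLDPUpperBound hgood⟩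

/-- If `(μ_n)` satisfies the extended LDP bounds in `𝕏` with speed `a_n`
and rate `I`, `Φ : 𝕏 → 𝕊` is Lipschitz, and the pushforward rate
`I'(y) = inf{I(x) : Φ(x) = y}` is a good rate function (compact sublevel sets for every
finite level), then the pushforward measures `ν_n = μ_n ∘ Φ⁻¹` satisfy the full LDP in `𝕊`
with speed `a_n` and rate `I'`. -/
theorem contraction_principle_good_rate
    {X S : Type*} [MetricSpace X] [MeasurableSpace X] [BorelSpace X]
    [MetricSpace S] [MeasurableSpace S] [BorelSpace S]
    (Φ : X → S) (L : NNReal) (hΦ : LipschitzWith L Φ)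
    (μ : ℕ → Measure X) (hprob : ∀ n, IsProbabilityMeasure (μ n))
    (a : ℕ → ℝ) (ha : ∀ n, 0 < a n) (ha' : Filter.Tendsto a Filter.atTop Filter.atTop)
    (I : X → ℝ≥0∞)
    (hlow : ExtLDPLowerBound μ a I) (hup : ExtLDPUpperBound μ a I)
    (hgood : ∀ M : ℝ≥0∞, M ≠ ⊤ → IsCompact {y : S | pushRate Φ I y ≤ M}) :
    (∀ G : Set S, IsOpen G →
      -(⨅ y ∈ G, (pushRate Φ I y : EReal)) ≤
        Filter.liminf (logProbRate a (fun n => (μ n).map Φ G)) Filter.atTop) ∧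
    (∀ F : Set S, IsClosed F →
      Filter.limsup (logProbRate a (fun n => (μ n).map Φ F)) Filter.atTop ≤
        -(⨅ y ∈ F, (pushRate Φ I y : EReal))) :=
  contraction_principle_good_rate_general Φ L hΦ μ a I hlow hup hgood
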